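/- Let A∈ℝ∖{0}, B∈ℝ. For every integer n≥1 and every x∈(−∞,1), the dispersion function satisfies the two identities: ζ_n(x)=[1+x((A+2B)/(A(n+1))−1)]·F(a_n,b_n;n+1;x)+((2x−1)/(n+1))·F(a_n,b_n;n+2;x)−(2x/((n+1)(n+2)))·F(a_n,b_n;n+3;x), and ζ_n(x)=((A+2B)/(A(n+1)))·x·F(a_n,b_n;n+1;x)+((n−(n+1)x)/(n+1))·F(a_n,b_n;n+2;x)+(2nx/((n+1)(n+2)))·F(a_n,b_n;n+3;x). -/

import Mathlib

open MeasureTheory Real Set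

/-- Rising factorial (Pochhammer symbol) `(a)_k`. -/
noncomputable def poch (a : ℝ) (k : ℕ) : ℝ := (ascPochhammer ℝ k).eval a

/-- Gauss hypergeometric function `F(a,b;c;x)`: given by Euler's integral representation
when `c > b > 0` (valid for all `x ∈ (-∞,1]`), and by the defining power series otherwise. -/
noncomputable def hyper (a b c x : ℝ) : ℝ :=
  if b < c ∧ 0 < b then
    Real.Gamma c / (Real.Gamma b * Real.Gamma (c - b)) *
      ∫ t in (0:ℝ)..1, t ^ (b - 1) * (1 - t) ^ (c - b - 1) * (1 - x * t) ^ (-a)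
  else
    ∑' k : ℕ, poch a k * poch b k / (poch c k * (Nat.factorial k)) * x ^ k

/-- The coefficient `a_t = (t - √(t²+8))/2`. -/
noncomputable def aCoef (t : ℝ) : ℝ := (t - Real.sqrt (t ^ 2 + 8)) / 2

/-- The coefficient `b_t = (t + √(t²+8))/2`. -/
noncomputable def bCoef (t : ℝ) : ℝ := (t + Real.sqrt (t ^ 2 + 8)) / 2

/-- `F_t(x) = F(a_t, b_t; t+1; x)`. -/
noncomputable def Fhyp (t x : ℝ) : ℝ := hyper (aCoef t) (bCoef t) (t + 1) x

/-- The dispersion function `ζ_n` associated with the quadratic profile `f₀(r) = Ar² + B`. -/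
noncomputable def zetaDisp (A B : ℝ) (n : ℕ) (x : ℝ) : ℝ :=
  Fhyp n x * (1 - x + (A + 2 * B) / (A * ((n : ℝ) + 1)) * x)
    + ∫ τ in (0:ℝ)..1, Fhyp n (τ * x) * τ ^ n * (-1 + 2 * x * τ)

/-!
For `0 < b < c`, Euler's integral writes `F(a,b;c;y)` as a multiple of
`I(p,q,r;y) = ∫₀¹ tᵖ (1-t)^q (1-yt)^r dt` with `p = b-1`, `q = c-b-1`, `r = -a`.
Differentiating under the integral sign and integrating by parts in `t` gives
`d/dτ [τ^c F(a,b;c+1;τx)] = c τ^(c-1) F(a,b;c;τx)`, so one integration by parts in `τ` turns the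
integral in `ζ_n` into the `F(a,b;n+2;x)` and `F(a,b;n+3;x)` terms of the first identity.
The two identities differ by Gauss' contiguous relation between `F(c)`, `F(c+1)`, `F(c+2)`, whose
coefficients collapse because `a_n + b_n = n` and `a_n b_n = -2`. For `n = 1` we have `a = -1`,
`b = c = 2`, so `F_1` is the power series; all functions involved are then polynomials and the
identities are checked directly.
-/

open intervalIntegral

noncomputable def eulerInt (p q r y : ℝ) : ℝ :=
  ∫ t in (0:ℝ)..1, t ^ p * (1 - t) ^ q * (1 - y * t) ^ r

lemma mul_lt_one_of_mem_Icc {y t : ℝ} (hy : y < 1) (ht : t ∈ Icc (0:ℝ) 1) : y * t < 1 := by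
  rcases le_or_gt y 0 with h | h <;> nlinarith [ht.1, ht.2]

lemma mul_lt_one_of_mem_uIcc {x τ : ℝ} (hx : x < 1) (hτ : τ ∈ uIcc (0:ℝ) 1) : τ * x < 1 := by
  rw [uIcc_of_le zero_le_one] at hτ
  rw [mul_comm]
  exact mul_lt_one_of_mem_Icc hx hτ

lemma continuousOn_one_sub_mul_rpow {y : ℝ} (hy : y < 1) (r : ℝ) :
    ContinuousOn (fun t : ℝ => (1 - y * t) ^ r) (Icc 0 1) :=
  ContinuousOn.rpow_const (by fun_prop)
    fun t ht => Or.inl (sub_pos.2 (mul_lt_one_of_mem_Icc hy ht)).ne'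

lemma intervalIntegrable_one_sub_rpow {q : ℝ} (hq : -1 < q) :
    IntervalIntegrable (fun t : ℝ => (1 - t) ^ q) volume 0 1 := by
  have h := (intervalIntegrable_rpow' hq (a := 0) (b := 1)).comp_sub_left 1
  norm_num at h
  exact h.symm

lemma intervalIntegrable_eulerInt {p q y : ℝ} (hp : -1 < p) (hq : -1 < q) (hy : y < 1) (r : ℝ) :
    IntervalIntegrable (fun t : ℝ => t ^ p * (1 - t) ^ q * (1 - y * t) ^ r) volume 0 1 := by
  have hleft : IntervalIntegrable (fun t : ℝ => t ^ p * (1 - t) ^ q * (1 - y * t) ^ r)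
      volume 0 (1/2) := by
    have hg : ContinuousOn (fun t : ℝ => (1 - t) ^ q * (1 - y * t) ^ r) (uIcc 0 (1/2)) := by
      rw [uIcc_of_le (by norm_num)]
      refine ContinuousOn.mul (ContinuousOn.rpow_const (by fun_prop) fun t ht => ?_)
        ((continuousOn_one_sub_mul_rpow hy r).mono (Icc_subset_Icc le_rfl (by norm_num)))
      exact Or.inl (by linarith [ht.2])
    convert (intervalIntegrable_rpow' hp).mul_continuousOn hg using 1
    funext t; ring
  have hright : IntervalIntegrable (fun t : ℝ => t ^ p * (1 - t) ^ q * (1 - y * t) ^ r)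
      volume (1/2) 1 := by
    have hf := (intervalIntegrable_one_sub_rpow hq).mono_set (c := 1/2) (d := 1) (by
      rw [uIcc_of_le (by norm_num), uIcc_of_le zero_le_one]
      exact Icc_subset_Icc (by norm_num) le_rfl)
    have hg : ContinuousOn (fun t : ℝ => t ^ p * (1 - y * t) ^ r) (uIcc (1/2) 1) := by
      rw [uIcc_of_le (by norm_num)]
      refine ContinuousOn.mul (ContinuousOn.rpow_const (by fun_prop) fun t ht => ?_)
        ((continuousOn_one_sub_mul_rpow hy r).mono (Icc_subset_Icc (by norm_num) le_rfl))
      exact Or.inl (by linarith [ht.1])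
    convert hf.mul_continuousOn hg using 1
    funext t; ring
  exact hleft.trans hright

section eulerInt

variable {p q r y : ℝ}

lemma eulerInt_succ_left (hp : -1 < p) (hq : -1 < q) (hy : y < 1) :
    eulerInt (p + 1) q r y = eulerInt p q r y - eulerInt p (q + 1) r y := by
  rw [eq_sub_iff_add_eq, eulerInt, eulerInt, eulerInt, ← integral_add
    (intervalIntegrable_eulerInt (by linarith) hq hy r)
    (intervalIntegrable_eulerInt hp (by linarith) hy r)]
  refine integral_congr fun t ht => ?_
  rw [uIcc_of_le zero_le_one] at ht
  simp only [rpow_add_one' ht.1 (by linarith : p + 1 ≠ 0),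
    rpow_add_one' (sub_nonneg.2 ht.2) (by linarith : q + 1 ≠ 0)]
  ring

lemma eulerInt_succ_right (hp : -1 < p) (hq : -1 < q) (hy : y < 1) :
    eulerInt p q (r + 1) y = eulerInt p q r y - y * eulerInt (p + 1) q r y := by
  rw [eq_sub_iff_add_eq, eulerInt, eulerInt, eulerInt, ← intervalIntegral.integral_const_mul,
    ← integral_add (intervalIntegrable_eulerInt hp hq hy (r + 1))
      ((intervalIntegrable_eulerInt (by linarith) hq hy r).const_mul y)]
  refine integral_congr fun t ht => ?_
  rw [uIcc_of_le zero_le_one] at ht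
  simp only [rpow_add_one' ht.1 (by linarith : p + 1 ≠ 0),
    rpow_add_one (sub_pos.2 (mul_lt_one_of_mem_Icc hy ht)).ne']
  ring

lemma eulerInt_integration_by_parts (hp : -1 < p) (hq : -1 < q) (hy : y < 1) :
    (p + 1) * eulerInt p (q + 1) r y
      = (q + 1) * eulerInt (p + 1) q r y + r * y * eulerInt (p + 1) (q + 1) (r - 1) y := by
  set f : ℝ → ℝ := fun t => t ^ (p + 1) * (1 - t) ^ (q + 1) * (1 - y * t) ^ r
  set f' : ℝ → ℝ := fun t => (p + 1) * (t ^ p * (1 - t) ^ (q + 1) * (1 - y * t) ^ r)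
      - (q + 1) * (t ^ (p + 1) * (1 - t) ^ q * (1 - y * t) ^ r)
      - r * y * (t ^ (p + 1) * (1 - t) ^ (q + 1) * (1 - y * t) ^ (r - 1))
  have hderiv : ∀ t ∈ Ioo (0:ℝ) 1, HasDerivAt f (f' t) t := by
    intro t ht
    have h₁ := (hasDerivAt_id t).rpow_const (p := p + 1) (Or.inl ht.1.ne')
    have h₂ := ((hasDerivAt_id t).const_sub 1).rpow_const (p := q + 1)
      (Or.inl (sub_pos.2 ht.2).ne')
    have h₃ := (((hasDerivAt_id t).const_mul y).const_sub 1).rpow_const (p := r)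
      (Or.inl (sub_pos.2 (mul_lt_one_of_mem_Icc hy (Ioo_subset_Icc_self ht))).ne')
    refine ((h₁.mul h₂).mul h₃).congr_deriv ?_
    simp only [f', id, Pi.mul_apply, add_sub_cancel_right]
    ring
  have hcont : ContinuousOn f (Icc 0 1) := by
    refine ContinuousOn.mul (ContinuousOn.mul ?_ ?_) (continuousOn_one_sub_mul_rpow hy r)
    · exact continuousOn_id.rpow_const fun t _ => Or.inr (by linarith)
    · exact ContinuousOn.rpow_const (by fun_prop) fun t _ => Or.inr (by linarith)
  have hint : ∀ {p' q' r' : ℝ}, -1 < p' → -1 < q' → ∀ c : ℝ, IntervalIntegrable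
      (fun t => c * (t ^ p' * (1 - t) ^ q' * (1 - y * t) ^ r')) volume 0 1 :=
    fun hp' hq' c => (intervalIntegrable_eulerInt hp' hq' hy _).const_mul c
  have hFTC := integral_eq_sub_of_hasDeriv_right_of_le zero_le_one hcont
    (fun t ht => (hderiv t ht).hasDerivWithinAt)
    (((hint hp (by linarith) _).sub (hint (by linarith) hq _)).sub
      (hint (by linarith) (by linarith) _))
  rw [integral_sub ((hint hp (by linarith) _).sub (hint (by linarith) hq _))
      (hint (by linarith) (by linarith) _),
    integral_sub (hint hp (by linarith) _) (hint (by linarith) hq _),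
    intervalIntegral.integral_const_mul, intervalIntegral.integral_const_mul,
    intervalIntegral.integral_const_mul] at hFTC
  have hf₀ : f 0 = 0 := by simp [f, zero_rpow (by linarith : p + 1 ≠ 0)]
  have hf₁ : f 1 = 0 := by simp [f, zero_rpow (by linarith : q + 1 ≠ 0)]
  rw [hf₀, hf₁] at hFTC
  simp only [eulerInt]
  linarith

lemma exists_ball_bound_one_sub_mul_rpow (hy : y < 1) (s : ℝ) :
    ∃ ε > 0, ∃ C, ∀ z ∈ Metric.ball y ε, z < 1 ∧ ∀ t ∈ Icc (0:ℝ) 1, ‖(1 - z * t) ^ s‖ ≤ C := by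
  have hε : 0 < (1 - y) / 2 := by linarith
  have hlt : ∀ z ∈ Metric.closedBall y ((1 - y) / 2), z < 1 := by
    intro z hz
    rw [Metric.mem_closedBall, dist_eq, abs_le] at hz
    linarith
  obtain ⟨C, hC⟩ := ((isCompact_closedBall y _).prod isCompact_Icc).exists_bound_of_continuousOn
    (ContinuousOn.rpow_const (f := fun w : ℝ × ℝ => 1 - w.1 * w.2) (p := s) (by fun_prop)
      fun w hw => Or.inl (sub_pos.2 (mul_lt_one_of_mem_Icc (hlt _ hw.1) hw.2)).ne')
  exact ⟨_, hε, C, fun z hz => ⟨hlt z (Metric.ball_subset_closedBall hz),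
    fun t ht => hC (z, t) ⟨Metric.ball_subset_closedBall hz, ht⟩⟩⟩

lemma hasDerivAt_eulerInt_integrand {t z : ℝ} (ht : 0 < t) (hz : 0 < 1 - z * t) :
    HasDerivAt (fun z => t ^ p * (1 - t) ^ q * (1 - z * t) ^ r)
      (-r * (t ^ (p + 1) * (1 - t) ^ q * (1 - z * t) ^ (r - 1))) z := by
  refine ((((hasDerivAt_id z).mul_const t).const_sub 1).rpow_const (p := r)
    (Or.inl hz.ne')).const_mul (t ^ p * (1 - t) ^ q) |>.congr_deriv ?_
  rw [rpow_add_one ht.ne']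
  simp only [id]
  ring

lemma hasDerivAt_eulerInt (hp : -1 < p) (hq : -1 < q) (hy : y < 1) :
    HasDerivAt (eulerInt p q r) (-(r * eulerInt (p + 1) q (r - 1) y)) y := by
  obtain ⟨ε, hε, C, hC⟩ := exists_ball_bound_one_sub_mul_rpow hy (r - 1)
  have hbound : ∀ t ∈ uIoc (0:ℝ) 1, ∀ z ∈ Metric.ball y ε,
      ‖-r * (t ^ (p + 1) * (1 - t) ^ q * (1 - z * t) ^ (r - 1))‖ ≤ |r| * C * (1 - t) ^ q := by
    intro t ht z hz
    rw [uIoc_of_le zero_le_one] at ht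
    have hg := (hC z hz).2 t (Ioc_subset_Icc_self ht)
    have ht₁ : t ^ (p + 1) ≤ 1 := rpow_le_one ht.1.le ht.2 (by linarith)
    have hq₀ := rpow_nonneg (sub_nonneg.2 ht.2) q
    rw [norm_mul, norm_neg, norm_mul, norm_mul, Real.norm_of_nonneg (rpow_nonneg ht.1.le _),
      Real.norm_of_nonneg hq₀, Real.norm_eq_abs]
    calc |r| * (t ^ (p + 1) * (1 - t) ^ q * ‖(1 - z * t) ^ (r - 1)‖)
        ≤ |r| * (1 * (1 - t) ^ q * C) := by gcongr
      _ = |r| * C * (1 - t) ^ q := by ring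
  have hdiff : ∀ t ∈ uIoc (0:ℝ) 1, ∀ z ∈ Metric.ball y ε,
      HasDerivAt (fun z => t ^ p * (1 - t) ^ q * (1 - z * t) ^ r)
        (-r * (t ^ (p + 1) * (1 - t) ^ q * (1 - z * t) ^ (r - 1))) z := by
    intro t ht z hz
    rw [uIoc_of_le zero_le_one] at ht
    exact hasDerivAt_eulerInt_integrand ht.1
      (sub_pos.2 (mul_lt_one_of_mem_Icc (hC z hz).1 (Ioc_subset_Icc_self ht)))
  have key := hasDerivAt_integral_of_dominated_loc_of_deriv_le (μ := volume) (a := 0) (b := 1)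
    (Metric.ball_mem_nhds y hε)
    (Filter.eventually_of_mem (Metric.ball_mem_nhds y hε) fun z hz =>
      (intervalIntegrable_eulerInt hp hq (hC z hz).1 r).aestronglyMeasurable_restrict_uIoc)
    (intervalIntegrable_eulerInt hp hq hy r)
    ((intervalIntegrable_eulerInt (by linarith) hq hy (r - 1)).const_mul (-r)
      |>.aestronglyMeasurable_restrict_uIoc)
    (Filter.Eventually.of_forall hbound) ((intervalIntegrable_one_sub_rpow hq).const_mul _)
    (Filter.Eventually.of_forall hdiff)
  refine key.2.congr_deriv ?_
  rw [intervalIntegral.integral_const_mul, eulerInt]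
  ring

lemma eulerInt_contiguous (hp : -1 < p) (hq : -1 < q) (hy : y < 1) :
    (q + 1) * (y - 1) * eulerInt p q r y
      + (p + q + 2 - (p + 2 * q + r + 4) * y) * eulerInt p (q + 1) r y
      + (p + q + r + 3) * y * eulerInt p (q + 2) r y = 0 := by
  have hparts := eulerInt_integration_by_parts (r := r + 1) hp hq hy
  rw [add_sub_cancel_right, eulerInt_succ_right hp (by linarith) hy,
    eulerInt_succ_right (by linarith) hq hy] at hparts
  have h₁ := eulerInt_succ_left (r := r) hp hq hy
  have h₂ := eulerInt_succ_left (r := r) hp (by linarith : -1 < q + 1) hy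
  have h₃ := eulerInt_succ_left (r := r) (by linarith : -1 < p + 1) hq hy
  rw [show q + 1 + 1 = q + 2 by ring] at h₂
  rw [h₃, h₁, h₂] at hparts
  linear_combination hparts

lemma hasDerivAt_pow_mul_eulerInt {x τ : ℝ} (k : ℕ) (hk : (k:ℝ) = p + q + 1)
    (hp : -1 < p) (hq : -1 < q) (hτ : τ * x < 1) :
    HasDerivAt (fun τ => τ ^ (k + 1) * eulerInt p (q + 1) r (τ * x))
      ((q + 1) * (τ ^ k * eulerInt p q r (τ * x))) τ := by
  have hI := (hasDerivAt_eulerInt (r := r) hp (by linarith : -1 < q + 1) hτ).comp τ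
    (hasDerivAt_mul_const x)
  refine ((hasDerivAt_pow (k + 1) τ).mul hI).congr_deriv ?_
  have hparts := eulerInt_integration_by_parts (r := r) hp hq hτ
  have hsplit := eulerInt_succ_left (r := r) hp hq hτ
  simp only [Function.comp_apply, Nat.cast_add, Nat.cast_one, add_tsub_cancel_right, pow_succ]
  linear_combination τ ^ k * (hparts + (q + 1) * hsplit + eulerInt p (q + 1) r (τ * x) * hk)

end eulerInt

section hyper

variable {a b c x : ℝ}

lemma hyper_eq_eulerInt (hb : 0 < b) (hbc : b < c) (y : ℝ) :
    hyper a b c y = Gamma c / (Gamma b * Gamma (c - b)) * eulerInt (b - 1) (c - b - 1) (-a) y := by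
  rw [hyper, if_pos ⟨hbc, hb⟩, eulerInt]

lemma continuousOn_hyper_comp_mul (hb : 0 < b) (hbc : b < c) (hx : x < 1) :
    ContinuousOn (fun τ => hyper a b c (τ * x)) (uIcc 0 1) := by
  intro τ hτ
  simp_rw [hyper_eq_eulerInt hb hbc]
  have hI := (hasDerivAt_eulerInt (p := b - 1) (q := c - b - 1) (r := -a) (by linarith)
    (by linarith) (mul_lt_one_of_mem_uIcc hx hτ)).continuousAt.comp (x := τ)
    (by fun_prop : ContinuousAt (fun τ => τ * x) τ)
  exact (continuousAt_const.mul hI).continuousWithinAt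

lemma hasDerivAt_pow_mul_hyper {τ : ℝ} (m : ℕ) (hb : 0 < b) (hbm : b < m + 1) (hτ : τ * x < 1) :
    HasDerivAt (fun τ => τ ^ (m + 1) * hyper a b (m + 2) (τ * x))
      ((m + 1) * (τ ^ m * hyper a b (m + 1) (τ * x))) τ := by
  set K := Gamma (m + 2) / (Gamma b * Gamma (m + 2 - b))
  have h := (hasDerivAt_pow_mul_eulerInt (r := -a) m (p := b - 1) (q := m - b) (by ring)
    (by linarith) (by linarith) hτ).const_mul K
  have hfun : (fun τ => τ ^ (m + 1) * hyper a b (m + 2) (τ * x))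
      = fun τ => K * (τ ^ (m + 1) * eulerInt (b - 1) (m - b + 1) (-a) (τ * x)) := by
    funext τ
    rw [hyper_eq_eulerInt hb (by linarith), show (m:ℝ) + 2 - b - 1 = m - b + 1 by ring]
    ring
  rw [hfun]
  refine h.congr_deriv ?_
  have hmb : 0 < (m:ℝ) + 1 - b := by linarith
  have hΓb := (Gamma_pos_of_pos hb).ne'
  have hΓmb := (Gamma_pos_of_pos hmb).ne'
  simp only [K]
  rw [hyper_eq_eulerInt hb hbm, show (m:ℝ) + 1 - b - 1 = m - b by ring,
    show (m:ℝ) + 2 = m + 1 + 1 by ring, Gamma_add_one (s := m + 1) (by positivity),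
    show (m:ℝ) + 1 + 1 - b = m + 1 - b + 1 by ring, Gamma_add_one (s := m + 1 - b) hmb.ne']
  field_simp
  ring

lemma integral_pow_mul_hyper (m : ℕ) (hb : 0 < b) (hbm : b < m + 1) (hx : x < 1) :
    ∫ τ in (0:ℝ)..1, τ ^ m * hyper a b (m + 1) (τ * x) = hyper a b (m + 2) x / (m + 1) := by
  have hFTC := integral_eq_sub_of_hasDerivAt
    (fun τ hτ => hasDerivAt_pow_mul_hyper (a := a) m hb hbm (mul_lt_one_of_mem_uIcc hx hτ))
    (((continuousOn_pow m).mul (continuousOn_hyper_comp_mul hb hbm hx)).const_smul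
      ((m:ℝ) + 1) |>.intervalIntegrable)
  rw [intervalIntegral.integral_const_mul] at hFTC
  simp only [one_pow, one_mul, zero_pow m.succ_ne_zero, zero_mul, sub_zero] at hFTC
  rw [eq_div_iff (by positivity)]
  linarith

lemma integral_hyper_mul_pow_mul_linear (n : ℕ) (hb : 0 < b) (hbn : b < n + 1) (hx : x < 1) :
    ∫ τ in (0:ℝ)..1, hyper a b (n + 1) (τ * x) * τ ^ n * (-1 + 2 * x * τ)
      = (2 * x - 1) / (n + 1) * hyper a b (n + 2) x
        - 2 * x / ((n + 1) * (n + 2)) * hyper a b (n + 3) x := by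
  have hparts := integral_mul_deriv_eq_deriv_mul (a := 0) (b := 1)
    (u := fun τ => 2 * x * τ - 1) (u' := fun _ => 2 * x)
    (fun τ _ => (((hasDerivAt_id τ).const_mul (2 * x)).sub_const 1).congr_deriv (mul_one _))
    (fun τ hτ => hasDerivAt_pow_mul_hyper (a := a) n hb hbn (mul_lt_one_of_mem_uIcc hx hτ))
    intervalIntegrable_const
    (((continuousOn_pow n).mul (continuousOn_hyper_comp_mul hb hbn hx)).const_smul
      ((n:ℝ) + 1) |>.intervalIntegrable)
  have hlast := integral_pow_mul_hyper (a := a) (n + 1) hb (by push_cast; linarith) hx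
  push_cast at hlast
  rw [show (n:ℝ) + 1 + 1 = n + 2 by ring, show (n:ℝ) + 1 + 2 = n + 3 by ring] at hlast
  have hlhs : ∫ τ in (0:ℝ)..1, (2 * x * τ - 1) * ((n + 1) * (τ ^ n * hyper a b (n + 1) (τ * x)))
      = (n + 1) * ∫ τ in (0:ℝ)..1, hyper a b (n + 1) (τ * x) * τ ^ n * (-1 + 2 * x * τ) := by
    rw [← intervalIntegral.integral_const_mul]
    congr 1; funext τ; ring
  rw [hlhs, intervalIntegral.integral_const_mul, hlast] at hparts
  simp only [mul_one, one_pow, one_mul, mul_zero, zero_pow n.succ_ne_zero, zero_mul,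
    sub_zero] at hparts
  generalize ∫ τ in (0:ℝ)..1, hyper a b (n + 1) (τ * x) * τ ^ n * (-1 + 2 * x * τ) = J at hparts ⊢
  have hn₂ : (n:ℝ) + 2 ≠ 0 := by positivity
  field_simp at hparts ⊢
  linear_combination hparts

lemma hyper_contiguous (hb : 0 < b) (hbc : b < c) (hx : x < 1) :
    c * (c + 1) * (x - 1) * hyper a b c x
      + (c + 1) * (c - (2 * c - a - b + 1) * x) * hyper a b (c + 1) x
      + (c + 1 - a) * (c + 1 - b) * x * hyper a b (c + 2) x = 0 := by
  have h := eulerInt_contiguous (p := b - 1) (q := c - b - 1) (r := -a) (by linarith)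
    (by linarith) hx
  have hΓ₁ : Gamma (c + 1) = c * Gamma c := Gamma_add_one (by linarith)
  have hΓ₂ : Gamma (c + 2) = (c + 1) * (c * Gamma c) := by
    rw [show c + 2 = c + 1 + 1 by ring, Gamma_add_one (by linarith), hΓ₁]
  have hΓ₃ : Gamma (c + 1 - b) = (c - b) * Gamma (c - b) := by
    rw [show c + 1 - b = c - b + 1 by ring, Gamma_add_one (by linarith)]
  have hΓ₄ : Gamma (c + 2 - b) = (c + 1 - b) * ((c - b) * Gamma (c - b)) := by
    rw [show c + 2 - b = c + 1 - b + 1 by ring, Gamma_add_one (by linarith), hΓ₃]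
  rw [hyper_eq_eulerInt hb hbc, hyper_eq_eulerInt hb (by linarith : b < c + 1),
    hyper_eq_eulerInt hb (by linarith : b < c + 2), hΓ₁, hΓ₂, hΓ₃, hΓ₄,
    show c + 1 - b - 1 = c - b - 1 + 1 by ring, show c + 2 - b - 1 = c - b - 1 + 2 by ring]
  have hΓb := (Gamma_pos_of_pos hb).ne'
  have hΓcb := (Gamma_pos_of_pos (by linarith : 0 < c - b)).ne'
  have hcb : c - b ≠ 0 := by linarith
  have hcb₁ : c + 1 - b ≠ 0 := by linarith
  linear_combination (norm := skip)
    (c * (c + 1) * Gamma c / (Gamma b * Gamma (c - b) * (c - b))) * h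
  field_simp
  ring

end hyper

lemma hyper_neg_one_of_not_euler {b c : ℝ} (h : ¬(b < c ∧ 0 < b)) (y : ℝ) :
    hyper (-1) b c y = 1 - b * y / c := by
  rw [hyper, if_neg h, tsum_eq_sum (s := Finset.range 2) fun k hk => ?_]
  · simp [Finset.sum_range_succ, poch]
    ring
  · obtain ⟨m, rfl⟩ : ∃ m, k = m + 2 := ⟨k - 2, by simp at hk; omega⟩
    rw [poch, show (-1:ℝ) = -((1:ℕ):ℝ) by simp, ascPochhammer_eval_neg_coe_nat_of_lt (by omega)]
    simp

lemma hyper_neg_one_two_three (y : ℝ) : hyper (-1) 2 3 y = 1 - 2 * y / 3 := by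
  rw [hyper, if_pos (by norm_num)]
  norm_num [Gamma_ofNat_eq_factorial]
  have h (t : ℝ) : t * (1 - y * t) = t - y * t ^ 2 := by ring
  simp (disch := apply Continuous.intervalIntegrable; fun_prop)
    [h, intervalIntegral.integral_sub, intervalIntegral.integral_const_mul, integral_pow]
  ring

lemma hyper_neg_one_two_four (y : ℝ) : hyper (-1) 2 4 y = 1 - y / 2 := by
  rw [hyper, if_pos (by norm_num)]
  norm_num [Gamma_ofNat_eq_factorial]
  have h (t : ℝ) : t * (1 - t) * (1 - y * t) = t - t ^ 2 - y * (t ^ 2 - t ^ 3) := by ring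
  simp (disch := apply Continuous.intervalIntegrable; fun_prop)
    [h, intervalIntegral.integral_sub, intervalIntegral.integral_const_mul, integral_pow]
  ring

lemma aCoef_add_bCoef (t : ℝ) : aCoef t + bCoef t = t := by
  rw [aCoef, bCoef]; ring

lemma aCoef_mul_bCoef (t : ℝ) : aCoef t * bCoef t = -2 := by
  rw [aCoef, bCoef]
  nlinarith [sq_sqrt (by positivity : (0:ℝ) ≤ t ^ 2 + 8)]

lemma bCoef_pos (t : ℝ) : 0 < bCoef t := by
  have : |t| < √(t ^ 2 + 8) := by
    rw [← sqrt_sq_eq_abs]; exact sqrt_lt_sqrt (sq_nonneg t) (by linarith)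
  rw [bCoef]; linarith [neg_abs_le t]

lemma bCoef_lt_add_one {t : ℝ} (ht : 1 < t) : bCoef t < t + 1 := by
  have : √(t ^ 2 + 8) < t + 2 := (sqrt_lt' (by linarith)).2 (by nlinarith)
  rw [bCoef]; linarith

lemma aCoef_one : aCoef 1 = -1 := by
  norm_num [aCoef, show √(9:ℝ) = 3 by rw [sqrt_eq_iff_mul_self_eq] <;> norm_num]

lemma bCoef_one : bCoef 1 = 2 := by
  norm_num [bCoef, show √(9:ℝ) = 3 by rw [sqrt_eq_iff_mul_self_eq] <;> norm_num]

lemma integral_Fhyp_mul_pow_mul_linear {n : ℕ} (hn : 1 ≤ n) {x : ℝ} (hx : x < 1) :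
    ∫ τ in (0:ℝ)..1, Fhyp n (τ * x) * τ ^ n * (-1 + 2 * x * τ)
      = (2 * x - 1) / (n + 1) * hyper (aCoef n) (bCoef n) (n + 2) x
        - 2 * x / ((n + 1) * (n + 2)) * hyper (aCoef n) (bCoef n) (n + 3) x := by
  rcases hn.eq_or_lt with rfl | hn
  · have h (τ : ℝ) : (1 - τ * x) * τ * (-1 + 2 * x * τ)
        = 3 * x * τ ^ 2 - (τ + 2 * x ^ 2 * τ ^ 3) := by ring
    norm_num [Fhyp, aCoef_one, bCoef_one, hyper_neg_one_of_not_euler, hyper_neg_one_two_three,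
      hyper_neg_one_two_four]
    simp (disch := apply Continuous.intervalIntegrable; fun_prop)
      [h, intervalIntegral.integral_sub, intervalIntegral.integral_add,
        intervalIntegral.integral_const_mul, integral_pow]
    ring
  · exact integral_hyper_mul_pow_mul_linear n (bCoef_pos n)
      (bCoef_lt_add_one (by exact_mod_cast hn)) hx

lemma Fhyp_contiguous {n : ℕ} (hn : 1 ≤ n) {x : ℝ} (hx : x < 1) :
    (1 - x) * Fhyp n x
      + ((n + 3) * x - (n + 1)) / (n + 1) * hyper (aCoef n) (bCoef n) (n + 2) x
      - 2 * x / (n + 2) * hyper (aCoef n) (bCoef n) (n + 3) x = 0 := by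
  rcases hn.eq_or_lt with rfl | hn
  · norm_num [Fhyp, aCoef_one, bCoef_one, hyper_neg_one_of_not_euler, hyper_neg_one_two_three,
      hyper_neg_one_two_four]
    ring
  · have h := hyper_contiguous (a := aCoef n) (bCoef_pos n)
      (bCoef_lt_add_one (by exact_mod_cast hn)) hx
    rw [show (n:ℝ) + 1 + 1 = n + 2 by ring, show (n:ℝ) + 1 + 2 = n + 3 by ring] at h
    have hn₂ : (n:ℝ) + 2 ≠ 0 := by positivity
    -- Gauss' relation at `c = n + 1`, divided by `-(n + 1)(n + 2)`, differs from the goal by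
    -- multiples of `a + b - n` and `a b + 2`.
    linear_combination (norm := skip) (-1 / ((n + 1) * (n + 2))) * h
      + (x * hyper (aCoef n) (bCoef n) (n + 2) x / (n + 1)
        - x * hyper (aCoef n) (bCoef n) (n + 3) x / (n + 1)) * aCoef_add_bCoef n
      + x * hyper (aCoef n) (bCoef n) (n + 3) x / ((n + 1) * (n + 2)) * aCoef_mul_bCoef n
    rw [Fhyp]
    field_simp
    ring

theorem zetaDisp_identities_general (A B : ℝ) (n : ℕ) (hn : 1 ≤ n) (x : ℝ) (hx : x < 1) :
    zetaDisp A B n x =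
      (1 + x * ((A + 2 * B) / (A * ((n : ℝ) + 1)) - 1)) *
          hyper (aCoef n) (bCoef n) ((n : ℝ) + 1) x
        + (2 * x - 1) / ((n : ℝ) + 1) * hyper (aCoef n) (bCoef n) ((n : ℝ) + 2) x
        - 2 * x / (((n : ℝ) + 1) * ((n : ℝ) + 2)) * hyper (aCoef n) (bCoef n) ((n : ℝ) + 3) x
    ∧ zetaDisp A B n x =
      (A + 2 * B) / (A * ((n : ℝ) + 1)) * x * hyper (aCoef n) (bCoef n) ((n : ℝ) + 1) x
        + ((n : ℝ) - ((n : ℝ) + 1) * x) / ((n : ℝ) + 1) *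
            hyper (aCoef n) (bCoef n) ((n : ℝ) + 2) x
        + 2 * (n : ℝ) * x / (((n : ℝ) + 1) * ((n : ℝ) + 2)) *
            hyper (aCoef n) (bCoef n) ((n : ℝ) + 3) x := by
  rw [zetaDisp, integral_Fhyp_mul_pow_mul_linear hn hx]
  have hcontig := Fhyp_contiguous hn hx
  rw [Fhyp] at hcontig ⊢
  generalize (A + 2 * B) / (A * ((n : ℝ) + 1)) = K
  have hn₂ : (n:ℝ) + 2 ≠ 0 := by positivity
  refine ⟨by ring, ?_⟩
  linear_combination (norm := skip) hcontig
  field_simp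
  ring

/-- the two reformulations of the dispersion function `ζ_n` in terms of
Gauss hypergeometric functions with third parameters `n+1`, `n+2`, `n+3`. -/
theorem zetaDisp_identities (A B : ℝ) (hA : A ≠ 0) (n : ℕ) (hn : 1 ≤ n) (x : ℝ) (hx : x < 1) :
    zetaDisp A B n x =
      (1 + x * ((A + 2 * B) / (A * ((n : ℝ) + 1)) - 1)) *
          hyper (aCoef n) (bCoef n) ((n : ℝ) + 1) x
        + (2 * x - 1) / ((n : ℝ) + 1) * hyper (aCoef n) (bCoef n) ((n : ℝ) + 2) x
        - 2 * x / (((n : ℝ) + 1) * ((n : ℝ) + 2)) * hyper (aCoef n) (bCoef n) ((n : ℝ) + 3) x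
    ∧ zetaDisp A B n x =
      (A + 2 * B) / (A * ((n : ℝ) + 1)) * x * hyper (aCoef n) (bCoef n) ((n : ℝ) + 1) x
        + ((n : ℝ) - ((n : ℝ) + 1) * x) / ((n : ℝ) + 1) *
            hyper (aCoef n) (bCoef n) ((n : ℝ) + 2) x
        + 2 * (n : ℝ) * x / (((n : ℝ) + 1) * ((n : ℝ) + 2)) *
            hyper (aCoef n) (bCoef n) ((n : ℝ) + 3) x :=
  zetaDisp_identities_general A B n hn x hx
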